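/- arXiv:1111.6807 — 2 statements merged into one kernel-verified Lean document; each statement's English description precedes it below -/
import Mathlib

section
/- Let f(x) = 1/(x log b) · 1_{(1,b)}(x) with b ≥ e². Then the self-convolution g = f*f satisfies g(x) ≤ 1/x for all 2 < x < b+1. -/
/-!
On `(2, b + 1)` the two factors of `f (x - y) * f y` are both nonzero exactly for `y ∈ (1, x - 1)`,
so the partial fractions `1 / ((x - y) y) = (1 / y + 1 / (x - y)) / x` give
`g x = 2 log (x - 1) / (x log² b)`. Since `log (x - 1) ≤ log b` and `2 ≤ log b` when `b ≥ e²`,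
the numerator is at most `log² b`.
-/

open MeasureTheory Real Set

noncomputable section

def truncParetoDensity (b x : ℝ) : ℝ :=
  if 1 < x ∧ x < b then 1 / (x * log b) else 0

theorem truncParetoDensity_sub_mul_eq_indicator {b x : ℝ} (hx : x < b + 1) :
    (fun y => truncParetoDensity b (x - y) * truncParetoDensity b y) =
      (Ioo 1 (x - 1)).indicator fun y => 1 / ((x - y) * y) / log b ^ 2 := by
  funext y
  by_cases hy : y ∈ Ioo 1 (x - 1)
  · rw [indicator_of_mem hy, truncParetoDensity, truncParetoDensity,
      if_pos ⟨by linarith [hy.2], by linarith [hy.1]⟩, if_pos ⟨hy.1, by linarith [hy.2]⟩]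
    field_simp
  · rw [indicator_of_notMem hy, truncParetoDensity, truncParetoDensity]
    rcases not_and_or.mp hy with hy1 | hyx
    · rw [if_neg (show ¬(1 < y ∧ y < b) from fun h => hy1 h.1), mul_zero]
    · rw [if_neg (show ¬(1 < x - y ∧ x - y < b) from fun h => hyx (by linarith [h.1])),
        zero_mul]

theorem integral_one_div_sub_mul {x : ℝ} (hx : 2 ≤ x) :
    ∫ y in (1 : ℝ)..(x - 1), 1 / ((x - y) * y) = 2 * log (x - 1) / x := by
  have hx1 : (1 : ℝ) ≤ x - 1 := by linarith
  have h0 : (0 : ℝ) ∉ uIcc 1 (x - 1) := by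
    rw [uIcc_of_le hx1]
    exact fun h => by linarith [h.1]
  have hpartial : EqOn (fun y => 1 / ((x - y) * y)) (fun y => 1 / x * (1 / y + 1 / (x - y)))
      (uIcc 1 (x - 1)) := by
    intro y hy
    rw [uIcc_of_le hx1] at hy
    have hy0 : y ≠ 0 := by linarith [hy.1]
    have hxy : x - y ≠ 0 := by linarith [hy.2]
    have hx0 : x ≠ 0 := by linarith
    field_simp
    ring
  have hrecip : IntervalIntegrable (fun y : ℝ => 1 / y) volume 1 (x - 1) :=
    intervalIntegral.intervalIntegrable_one_div (fun y hy h => h0 (h ▸ hy)) continuousOn_id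
  have hreflected : ∫ y in (1 : ℝ)..(x - 1), 1 / (x - y) = ∫ y in (1 : ℝ)..(x - 1), 1 / y := by
    rw [intervalIntegral.integral_comp_sub_left (fun y => 1 / y) x, sub_sub_cancel]
  have hreflected_int : IntervalIntegrable (fun y : ℝ => 1 / (x - y)) volume 1 (x - 1) := by
    simpa [sub_sub_cancel] using (hrecip.symm.comp_sub_left x)
  rw [intervalIntegral.integral_congr hpartial, intervalIntegral.integral_const_mul,
    intervalIntegral.integral_add hrecip hreflected_int, hreflected, integral_one_div h0, div_one]
  ring

theorem integral_truncParetoDensity_sub_mul {b x : ℝ} (hx2 : 2 ≤ x) (hxb : x < b + 1) :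
    ∫ y, truncParetoDensity b (x - y) * truncParetoDensity b y =
      2 * log (x - 1) / (x * log b ^ 2) := by
  have hx1 : (1 : ℝ) ≤ x - 1 := by linarith
  rw [truncParetoDensity_sub_mul_eq_indicator hxb, integral_indicator measurableSet_Ioo,
    ← integral_Ioc_eq_integral_Ioo, ← intervalIntegral.integral_of_le hx1,
    intervalIntegral.integral_div, integral_one_div_sub_mul hx2, div_div]

theorem two_mul_log_div_le_one_div {b x : ℝ} (hb : exp 2 ≤ b) (hx2 : 2 ≤ x) (hxb : x < b + 1) :
    2 * log (x - 1) / (x * log b ^ 2) ≤ 1 / x := by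
  have hlogb : 2 ≤ log b := (le_log_iff_exp_le ((exp_pos 2).trans_le hb)).mpr hb
  have hlog_nonneg : 0 ≤ log (x - 1) := log_nonneg (by linarith)
  have hlog_le : log (x - 1) ≤ log b := log_le_log (by linarith) (by linarith)
  rw [mul_comm x, ← div_div]
  gcongr
  rw [div_le_one (by positivity)]
  nlinarith

/-- For `b ≥ e²`, the self-convolution of the truncated Pareto density satisfies
`g(x) ≤ 1/x` on `(2, b+1)`. -/
theorem stmt_4 (b : ℝ) (hb : Real.exp 2 ≤ b)
    (f : ℝ → ℝ)
    (hf : f = fun x => if 1 < x ∧ x < b then 1 / (x * Real.log b) else 0)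
    (g : ℝ → ℝ) (hg : g = fun x => ∫ y, f (x - y) * f y) :
    ∀ x, 2 < x → x < b + 1 → g x ≤ 1 / x := by
  intro x hx2 hxb
  have hf' : f = truncParetoDensity b := hf
  subst hg hf'
  show ∫ y, _ ≤ _
  rw [integral_truncParetoDensity_sub_mul hx2.le hxb]
  exact two_mul_log_div_le_one_div hb hx2.le hxb

end
end

section
/- For every constant C > 0 there exists b > 1 such that, for X and Y independent with common density f(x) = 1/(x log b) · 1_{(1,b)}(x), one has H(X+Y) > C·H(X), where H(W) = exp(2 h(W)) is the entropy power. -/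
/-!
Write `L = log b`. Then `log X` is uniform on `(0, L)`, so `h(X) = L/2 + log L`. Since
`u f(u) ≤ 1/L`, splitting `x = (x - y) + y` inside the convolution gives `(f*f)(x) ≤ 2/(xL)`,
hence `h(X+Y) ≥ log (L/2) + E log(X+Y)`, and `E log(X+Y) ≥ E max(log X, log Y) = 2L/3`.
So `h(X+Y) - h(X) ≥ L/6 - log 2`, i.e. `H(X+Y) ≥ e^{L/3}/4 · H(X)`, which beats `C · H(X)`
for `L` large.
-/

open MeasureTheory Real Set Function

lemma integrable_of_support_subset_of_abs_le {α : Type*} [MeasurableSpace α] {μ : Measure α}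
    {f : α → ℝ} {s : Set α} {M : ℝ} (hs : MeasurableSet s) (hμs : μ s ≠ ⊤)
    (hf : AEStronglyMeasurable f μ) (hsupp : support f ⊆ s) (hM : ∀ x ∈ s, |f x| ≤ M) :
    Integrable f μ :=
  (Measure.integrableOn_of_bounded hμs hf (ae_restrict_of_forall_mem hs hM)
    ).integrable_of_forall_notMem_eq_zero fun _ hx => notMem_support.1 fun h => hx (hsupp h)

lemma integral_max_const_of_mem_Icc {s L : ℝ} (hs : s ∈ Icc 0 L) :
    ∫ t in 0..L, max t s = (s ^ 2 + L ^ 2) / 2 := by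
  have hc : Continuous fun t : ℝ => max t s := continuous_id.max continuous_const
  rw [← intervalIntegral.integral_add_adjacent_intervals (hc.intervalIntegrable 0 s)
      (hc.intervalIntegrable s L),
    intervalIntegral.integral_congr (a := 0) (b := s) (g := fun _ => s),
    intervalIntegral.integral_congr (a := s) (b := L) (g := fun t => t)]
  · simp only [intervalIntegral.integral_const, integral_id, smul_eq_mul]
    ring
  · intro t ht
    rw [uIcc_of_le hs.2] at ht
    exact max_eq_left ht.1
  · intro t ht
    rw [uIcc_of_le hs.1] at ht
    exact max_eq_right ht.2

section SelfConvolution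

variable {f φ : ℝ → ℝ}

lemma integral_sub_mul_mul_eq (y : ℝ) :
    ∫ x, f (x - y) * f y * φ x = f y * ∫ u, f u * φ (u + y) := by
  rw [← integral_sub_right_eq_self (fun u => f u * φ (u + y)) y, ← integral_const_mul]
  congr 1 with x
  simp only [sub_add_cancel]
  ring

lemma mul_integral_sub_mul_le {M : ℝ} (hf0 : ∀ u, 0 ≤ f u) (hfi : Integrable f)
    (hfM : ∀ u, u * f u ≤ M) {x : ℝ} (hx : 0 ≤ x) :
    x * ∫ y, f (x - y) * f y ≤ 2 * M * ∫ u, f u := by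
  have hdom : ∀ y, x * (f (x - y) * f y) ≤ M * f y + M * f (x - y) := fun y => by
    have e : x * (f (x - y) * f y) = (x - y) * f (x - y) * f y + y * f y * f (x - y) := by ring
    rw [e]
    gcongr <;> first | exact hf0 _ | exact hfM _
  have hint : Integrable fun y => M * f y + M * f (x - y) :=
    (hfi.const_mul M).add ((hfi.comp_sub_left x).const_mul M)
  calc x * ∫ y, f (x - y) * f y = ∫ y, x * (f (x - y) * f y) := (integral_const_mul _ _).symm
    _ ≤ ∫ y, (M * f y + M * f (x - y)) := integral_mono_of_nonneg ?_ hint (ae_of_all _ hdom)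
    _ = 2 * M * ∫ u, f u := by
      rw [integral_add (hfi.const_mul M) ((hfi.comp_sub_left x).const_mul M), integral_const_mul,
        integral_const_mul, integral_sub_left_eq_self f (μ := volume) x]
      ring
  exact ae_of_all _ fun y => mul_nonneg hx (mul_nonneg (hf0 _) (hf0 _))

variable (h : Integrable (fun p : ℝ × ℝ => f (p.1 - p.2) * f p.2 * φ p.1)
  (volume.prod volume))
include h

lemma integrable_selfConv_mul : Integrable fun x => (∫ y, f (x - y) * f y) * φ x := by
  simpa only [integral_mul_const] using h.integral_prod_left

lemma integrable_mul_integral_mul_comp_add :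
    Integrable fun y => f y * ∫ u, f u * φ (u + y) := by
  simpa only [integral_sub_mul_mul_eq] using h.integral_prod_right

lemma integral_selfConv_mul_eq :
    ∫ x, (∫ y, f (x - y) * f y) * φ x = ∫ y, f y * ∫ u, f u * φ (u + y) := by
  simp_rw [← integral_mul_const, ← integral_sub_mul_mul_eq]
  exact integral_integral_swap h

end SelfConvolution

noncomputable def truncPareto (b x : ℝ) : ℝ :=
  if 1 < x ∧ x < b then 1 / (x * log b) else 0

noncomputable def truncParetoSumDensity (b x : ℝ) : ℝ :=
  ∫ y, truncPareto b (x - y) * truncPareto b y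

namespace truncPareto

variable {b : ℝ}

lemma mem_Ioo_of_ne_zero {x : ℝ} (h : truncPareto b x ≠ 0) : x ∈ Ioo 1 b := by
  by_contra hx
  exact h (if_neg hx)

@[fun_prop]
lemma measurable : Measurable (truncPareto b) :=
  Measurable.ite (measurableSet_Ioo (a := 1) (b := b)) (by fun_prop) measurable_const

variable (hb : 1 < b)
include hb

lemma nonneg (x : ℝ) : 0 ≤ truncPareto b x := by
  unfold truncPareto
  split_ifs with hx
  · have := log_pos hb
    have : 0 < x := by linarith [hx.1]
    positivity
  · exact le_rfl

lemma mul_self_le (x : ℝ) : x * truncPareto b x ≤ (log b)⁻¹ := by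
  unfold truncPareto
  split_ifs with hx
  · have : 0 < x := by linarith [hx.1]
    exact le_of_eq (by field_simp)
  · simpa using (log_pos hb).le

lemma le_inv_log (x : ℝ) : truncPareto b x ≤ (log b)⁻¹ := by
  by_cases hx : truncPareto b x = 0
  · simpa [hx] using (log_pos hb).le
  · have h1 : 1 < x := (mem_Ioo_of_ne_zero hx).1
    calc truncPareto b x ≤ x * truncPareto b x := le_mul_of_one_le_left (nonneg hb x) h1.le
      _ ≤ (log b)⁻¹ := mul_self_le hb x

lemma integrable_mul {φ : ℝ → ℝ} (hφ : Measurable φ) {M : ℝ}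
    (hM : ∀ u ∈ Icc 1 b, |φ u| ≤ M) :
    Integrable fun u => truncPareto b u * φ u := by
  refine integrable_of_support_subset_of_abs_le measurableSet_Icc (by simp)
    (measurable.mul hφ).aestronglyMeasurable (s := Icc 1 b) (M := (log b)⁻¹ * M) ?_ ?_
  · intro u hu
    exact Ioo_subset_Icc_self (mem_Ioo_of_ne_zero (left_ne_zero_of_mul hu))
  · intro u hu
    rw [abs_mul, abs_of_nonneg (nonneg hb u)]
    exact mul_le_mul (le_inv_log hb u) (hM u hu) (abs_nonneg _) (inv_nonneg.2 (log_pos hb).le)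

lemma integrable : Integrable (truncPareto b) := by
  simpa using integrable_mul hb measurable_const (φ := fun _ => 1) (M := 1) (by simp)

lemma integrable_sub_mul_mul {φ : ℝ → ℝ} (hφ : Measurable φ) {M : ℝ}
    (hM : ∀ x ∈ Icc 2 (2 * b), |φ x| ≤ M) :
    Integrable (fun p : ℝ × ℝ => truncPareto b (p.1 - p.2) * truncPareto b p.2 * φ p.1)
      (volume.prod volume) := by
  refine integrable_of_support_subset_of_abs_le (measurableSet_Icc.prod measurableSet_Icc)
    (by rw [Measure.prod_prod]; exact ENNReal.mul_ne_top (by simp) (by simp)) (by fun_prop)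
    (s := Icc 2 (2 * b) ×ˢ Icc 1 b) (M := (log b)⁻¹ * (log b)⁻¹ * M) ?_ ?_
  · intro p hp
    have h1 := mem_Ioo_of_ne_zero (left_ne_zero_of_mul (left_ne_zero_of_mul hp))
    have h2 := mem_Ioo_of_ne_zero (right_ne_zero_of_mul (left_ne_zero_of_mul hp))
    exact ⟨⟨by linarith [h1.1, h2.1], by linarith [h1.2, h2.2]⟩, h2.1.le, h2.2.le⟩
  · intro p hp
    have hL := inv_nonneg.2 (log_pos hb).le
    rw [abs_mul, abs_mul, abs_of_nonneg (nonneg hb _), abs_of_nonneg (nonneg hb _)]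
    exact mul_le_mul (mul_le_mul (le_inv_log hb _) (le_inv_log hb _) (nonneg hb _) hL)
      (hM _ hp.1) (abs_nonneg _) (mul_nonneg hL hL)

lemma integral_mul_comp_log {φ : ℝ → ℝ} (hφ : Continuous φ) :
    ∫ u, truncPareto b u * φ (log u) = (∫ t in 0..log b, φ t) / log b := by
  have hpos : ∀ u ∈ uIcc 1 b, 0 < u := fun u hu => by
    rw [uIcc_of_le hb.le] at hu
    linarith [hu.1]
  have hind : (fun u => truncPareto b u * φ (log u)) =
      (Ioo 1 b).indicator fun u => (φ ∘ log) u * u⁻¹ / log b := by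
    ext u
    by_cases hu : 1 < u ∧ u < b
    · rw [truncPareto, if_pos hu, indicator_of_mem (show u ∈ Ioo 1 b from hu), comp_apply]
      field_simp
    · rw [truncPareto, if_neg hu, indicator_of_notMem (show u ∉ Ioo 1 b from hu), zero_mul]
  rw [hind, integral_indicator measurableSet_Ioo, ← integral_Ioc_eq_integral_Ioo,
    ← intervalIntegral.integral_of_le hb.le, intervalIntegral.integral_div,
    intervalIntegral.integral_comp_mul_deriv (fun u hu => hasDerivAt_log (hpos u hu).ne')
      (continuousOn_inv₀.mono fun u hu => (hpos u hu).ne') hφ, log_one]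

lemma integral_eq_one : ∫ u, truncPareto b u = 1 := by
  simpa [(log_pos hb).ne'] using integral_mul_comp_log hb continuous_const (φ := fun _ => 1)

lemma integral_mul_log_self :
    ∫ u, truncPareto b u * log (truncPareto b u) = -(log b / 2 + log (log b)) := by
  have hL := log_pos hb
  have hlog : ∀ u, truncPareto b u * log (truncPareto b u) =
      truncPareto b u * (-log u - log (log b)) := fun u => by
    by_cases hu : 1 < u ∧ u < b
    · have : 0 < u := by linarith [hu.1]
      rw [truncPareto, if_pos hu, one_div, log_inv, log_mul this.ne' hL.ne']
      ring
    · simp [truncPareto, if_neg hu]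
  simp_rw [hlog]
  rw [integral_mul_comp_log hb (by fun_prop) (φ := fun t => -t - log (log b)),
    intervalIntegral.integral_sub (f := fun t => -t) intervalIntegral.intervalIntegrable_id.neg
      intervalIntegrable_const, intervalIntegral.integral_neg]
  simp only [integral_id, intervalIntegral.integral_const, smul_eq_mul]
  field_simp
  ring

lemma integral_mul_max_log {y : ℝ} (hy : y ∈ Icc 1 b) :
    ∫ u, truncPareto b u * max (log u) (log y) = ((log y) ^ 2 + (log b) ^ 2) / (2 * log b) := by
  rw [integral_mul_comp_log hb (by fun_prop) (φ := fun t => max t (log y)),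
    integral_max_const_of_mem_Icc ⟨log_nonneg hy.1, log_le_log (by linarith [hy.1]) hy.2⟩]
  field_simp

lemma integral_mul_sq_log_add_sq :
    ∫ y, truncPareto b y * (((log y) ^ 2 + (log b) ^ 2) / (2 * log b)) = 2 * log b / 3 := by
  have hL := log_pos hb
  rw [integral_mul_comp_log hb (by fun_prop) (φ := fun t => (t ^ 2 + (log b) ^ 2) / (2 * log b)),
    intervalIntegral.integral_div, intervalIntegral.integral_add
      (intervalIntegral.intervalIntegrable_pow 2) intervalIntegrable_const]
  simp only [integral_pow, intervalIntegral.integral_const, smul_eq_mul]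
  field_simp
  ring

lemma integrable_sub_mul_mul_log :
    Integrable (fun p : ℝ × ℝ => truncPareto b (p.1 - p.2) * truncPareto b p.2 * log p.1)
      (volume.prod volume) :=
  integrable_sub_mul_mul hb measurable_log (M := log (2 * b)) fun x hx => by
    rw [abs_of_nonneg (log_nonneg (by linarith [hx.1]))]
    exact log_le_log (by linarith [hx.1]) hx.2

lemma sq_log_add_sq_div_le_integral_mul_log_add {y : ℝ} (hy : y ∈ Icc 1 b) :
    ((log y) ^ 2 + (log b) ^ 2) / (2 * log b) ≤ ∫ u, truncPareto b u * log (u + y) := by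
  rw [← integral_mul_max_log hb hy]
  refine integral_mono_of_nonneg (ae_of_all _ fun u => ?_) ?_ (ae_of_all _ fun u => ?_)
  · exact mul_nonneg (nonneg hb u) (le_max_of_le_right (log_nonneg hy.1))
  · refine integrable_mul hb (by fun_prop) (M := log (2 * b)) fun u hu => ?_
    rw [abs_of_nonneg (log_nonneg (by linarith [hu.1, hy.1]))]
    exact log_le_log (by linarith [hu.1, hy.1]) (by linarith [hu.2, hy.2])
  · by_cases hu : 1 < u ∧ u < b
    · refine mul_le_mul_of_nonneg_left (max_le ?_ ?_) (nonneg hb u)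
      · exact log_le_log (by linarith [hu.1]) (by linarith [hy.1])
      · exact log_le_log (by linarith [hy.1]) (by linarith [hu.1])
    · simp [truncPareto, if_neg hu]

end truncPareto

namespace truncParetoSumDensity

variable {b : ℝ}

lemma eq_zero_of_notMem {x : ℝ} (hx : x ∉ Ioo 2 (2 * b)) : truncParetoSumDensity b x = 0 := by
  refine integral_eq_zero_of_ae (ae_of_all _ fun y => ?_)
  by_contra hy
  have h1 := truncPareto.mem_Ioo_of_ne_zero (left_ne_zero_of_mul hy)
  have h2 := truncPareto.mem_Ioo_of_ne_zero (right_ne_zero_of_mul hy)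
  exact hx ⟨by linarith [h1.1, h2.1], by linarith [h1.2, h2.2]⟩

variable (hb : 1 < b)
include hb

lemma nonneg (x : ℝ) : 0 ≤ truncParetoSumDensity b x :=
  integral_nonneg fun _ => mul_nonneg (truncPareto.nonneg hb _) (truncPareto.nonneg hb _)

lemma le_two_div {x : ℝ} (hx : 0 < x) : truncParetoSumDensity b x ≤ 2 / (x * log b) := by
  have h := mul_integral_sub_mul_le (truncPareto.nonneg hb) (truncPareto.integrable hb)
    (truncPareto.mul_self_le hb) hx.le
  rw [truncPareto.integral_eq_one hb] at h
  have hL := log_pos hb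
  rw [le_div_iff₀ (mul_pos hx hL)]
  calc truncParetoSumDensity b x * (x * log b) = (x * truncParetoSumDensity b x) * log b := by ring
    _ ≤ (2 * (log b)⁻¹ * 1) * log b := mul_le_mul_of_nonneg_right h hL.le
    _ = 2 := by field_simp

lemma integrable : Integrable (truncParetoSumDensity b) := by
  have h := integrable_selfConv_mul (f := truncPareto b) (φ := fun _ => 1)
    (truncPareto.integrable_sub_mul_mul hb measurable_const (φ := fun _ => 1) (M := 1) (by simp))
  simp only [mul_one] at h
  exact h

lemma integral_eq_one : ∫ x, truncParetoSumDensity b x = 1 := by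
  simpa [truncParetoSumDensity, truncPareto.integral_eq_one hb] using
    integral_selfConv_mul_eq (f := truncPareto b) (φ := fun _ => 1)
    (truncPareto.integrable_sub_mul_mul hb measurable_const (φ := fun _ => 1) (M := 1) (by simp))

lemma integrable_mul_log : Integrable fun x => truncParetoSumDensity b x * log x :=
  integrable_selfConv_mul (truncPareto.integrable_sub_mul_mul_log hb)

lemma two_mul_log_div_three_le_integral_mul_log :
    2 * log b / 3 ≤ ∫ x, truncParetoSumDensity b x * log x := by
  have hG := truncPareto.integrable_sub_mul_mul_log hb
  rw [← truncPareto.integral_mul_sq_log_add_sq hb]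
  refine (integral_mono_of_nonneg (ae_of_all _ fun y => ?_)
    (integrable_mul_integral_mul_comp_add hG) (ae_of_all _ fun y => ?_)).trans_eq
    (integral_selfConv_mul_eq hG).symm
  · have := log_pos hb
    exact mul_nonneg (truncPareto.nonneg hb y) (by positivity)
  · by_cases hy : 1 < y ∧ y < b
    · exact mul_le_mul_of_nonneg_left
        (truncPareto.sq_log_add_sq_div_le_integral_mul_log_add hb ⟨hy.1.le, hy.2.le⟩)
        (truncPareto.nonneg hb y)
    · simp [truncPareto, if_neg hy]

variable (hL : 1 ≤ log b)
include hL

lemma le_one (x : ℝ) : truncParetoSumDensity b x ≤ 1 := by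
  by_cases hx : x ∈ Ioo 2 (2 * b)
  · calc truncParetoSumDensity b x ≤ 2 / (x * log b) := le_two_div hb (by linarith [hx.1])
      _ ≤ 1 := by
        rw [div_le_one (by nlinarith [hx.1])]
        nlinarith [hx.1]
  · simp [eq_zero_of_notMem hx]

lemma integral_mul_log_self_le :
    ∫ x, truncParetoSumDensity b x * log (truncParetoSumDensity b x) ≤
      log 2 - log (log b) - 2 * log b / 3 := by
  set g := truncParetoSumDensity b
  have hLpos := log_pos hb
  have hg0 : ∀ x, 0 ≤ g x := nonneg hb
  have hgi : Integrable g := integrable hb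
  have hgm := hgi.aestronglyMeasurable
  have hglogg : Integrable fun x => g x * log (g x) := by
    refine integrable_of_support_subset_of_abs_le measurableSet_Ioo (by simp)
      (hgm.mul hgm.aemeasurable.log.aestronglyMeasurable) (s := Ioo 2 (2 * b)) (M := 1) ?_ ?_
    · intro x hx
      by_contra h
      have h0 : g x = 0 := eq_zero_of_notMem h
      simp [h0] at hx
    · intro x _
      rcases (hg0 x).eq_or_lt with h | h
      · simp [← h]
      · rw [mul_comm]
        exact (abs_log_mul_self_lt _ h (le_one hb hL x)).le
  have hpt : ∀ x, g x * log (g x) ≤ (log 2 - log (log b)) * g x - g x * log x := fun x => by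
    rcases (hg0 x).eq_or_lt with h | h
    · simp [← h]
    have hx : x ∈ Ioo 2 (2 * b) := by
      by_contra hx
      exact h.ne' (eq_zero_of_notMem hx)
    have hx0 : 0 < x := by linarith [hx.1]
    have hlog : log (g x) ≤ log 2 - log (log b) - log x :=
      (log_le_log h (le_two_div hb hx0)).trans_eq <| by
        rw [log_div two_ne_zero (by positivity), log_mul hx0.ne' hLpos.ne']
        ring
    calc g x * log (g x) ≤ g x * (log 2 - log (log b) - log x) :=
          mul_le_mul_of_nonneg_left hlog h.le
      _ = (log 2 - log (log b)) * g x - g x * log x := by ring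
  calc ∫ x, g x * log (g x) ≤ ∫ x, ((log 2 - log (log b)) * g x - g x * log x) :=
        integral_mono hglogg ((hgi.const_mul _).sub (integrable_mul_log hb)) hpt
    _ = log 2 - log (log b) - ∫ x, g x * log x := by
        rw [integral_sub (hgi.const_mul _) (integrable_mul_log hb), integral_const_mul,
          integral_eq_one hb, mul_one]
    _ ≤ log 2 - log (log b) - 2 * log b / 3 := by
        linarith [two_mul_log_div_three_le_integral_mul_log hb]

end truncParetoSumDensity

/-- For every `C > 0` there exists `b > 1` such that, for independent `X, Y` with the
truncated Pareto density `f`, the entropy power of `X + Y` (whose density is `g = f*f`)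
exceeds `C` times the entropy power of `X`.  Here `H(W) = exp (2 h(W))`. -/
theorem stmt_6 :
    ∀ C > (0 : ℝ), ∃ b > (1 : ℝ),
      ∀ (f g : ℝ → ℝ),
        f = (fun x => if 1 < x ∧ x < b then 1 / (x * Real.log b) else 0) →
        g = (fun x => ∫ y, f (x - y) * f y) →
        Real.exp (2 * (-∫ x, g x * Real.log (g x))) >
          C * Real.exp (2 * (-∫ x, f x * Real.log (f x))) := by
  intro C hC
  -- `2 (h(X+Y) - h(X)) ≥ L/3 - 2 log 2`, so `L/3 > log C + 2 log 2` suffices.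
  set L := 3 * max (log C + 2 * log 2) 0 + 1
  have hL1 : 1 ≤ L := by linarith [le_max_right (log C + 2 * log 2) 0]
  have hCL : log C + 2 * log 2 < L / 3 := by linarith [le_max_left (log C + 2 * log 2) 0]
  have hb : 1 < exp L := one_lt_exp_iff.2 (by linarith)
  refine ⟨exp L, hb, fun f g hf hg => ?_⟩
  obtain rfl : f = truncPareto (exp L) := hf
  obtain rfl : g = truncParetoSumDensity (exp L) := hg
  have hX := truncPareto.integral_mul_log_self hb
  have hXY := truncParetoSumDensity.integral_mul_log_self_le hb (by rwa [log_exp])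
  rw [log_exp] at hX hXY
  rw [hX, gt_iff_lt]
  calc C * exp (2 * -(-(L / 2 + log L))) = exp (log C + L + 2 * log L) := by
        rw [exp_add, exp_add, exp_log hC, mul_assoc, ← exp_add]
        ring_nf
    _ < exp (2 * (2 * L / 3 + log L - log 2)) := exp_lt_exp.2 (by linarith)
    _ ≤ _ := exp_le_exp.2 (by linarith)
end
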